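/- arXiv:1910.13109 — 3 statements merged into one kernel-verified Lean document; each statement's English description precedes it below -/
import Mathlib

section
/- Let G be a finite group with subgroup H, let N be a finite group on which G acts by automorphisms, and let φ be a finite-dimensional complex representation of H ⋉ N. Then the induced representation Ind_H^G (φ|_H) of G is isomorphic, as a representation of G, to the restriction to G of the induced representation Ind_{H ⋉ N}^{G ⋉ N} φ. -/
/-- The space of the representation of `G` induced along `ι : H →* G`
(for `ι` the inclusion of a subgroup, this is the classical induced
representation `Ind_H^G σ`). -/
def IndSpace {H G : Type*} [Group H] [Group G] (ι : H →* G)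
    {V : Type*} [AddCommGroup V] [Module ℂ V] (σ : Representation ℂ H V) :
    Submodule ℂ (G → V) where
  carrier := {f | ∀ (h : H) (g : G), f (ι h * g) = σ h (f g)}
  add_mem' := by
    intro a b ha hb h g
    simp [ha h g, hb h g]
  zero_mem' := by
    intro h g
    simp
  smul_mem' := by
    intro c a ha h g
    simp [ha h g]

/-- The representation of `G` induced along `ι : H →* G` from `σ`. -/
def Ind {H G : Type*} [Group H] [Group G] (ι : H →* G)
    {V : Type*} [AddCommGroup V] [Module ℂ V] (σ : Representation ℂ H V) :
    Representation ℂ G (IndSpace ι σ) where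
  toFun g :=
    { toFun := fun f => ⟨fun x => (f : G → V) (x * g), by
        intro h x
        simpa [mul_assoc] using f.2 h (x * g)⟩
      map_add' := by intro f₁ f₂; ext x; simp
      map_smul' := by intro c f; ext x; simp }
  map_one' := by ext f x; simp
  map_mul' := by intro g₁ g₂; ext f x; simp [mul_assoc]

/-- Equivalence (isomorphism) of representations. -/
def RepEquiv {G : Type*} [Group G] {V W : Type*} [AddCommGroup V] [Module ℂ V]
    [AddCommGroup W] [Module ℂ W]
    (ρ : Representation ℂ G V) (τ : Representation ℂ G W) : Prop :=
  ∃ e : V ≃ₗ[ℂ] W, ∀ (g : G) (v : V), e (ρ g v) = τ g (e v)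

/-- The canonical embedding of `H ⋉ N` into `G ⋉ N` for a subgroup `H ≤ G`,
realizing `H ⋉ N` as the corresponding subgroup of `G ⋉ N`. -/
def sdInclusion {G N : Type*} [Group G] [Group N] (α : G →* MulAut N) (H : Subgroup G) :
    (N ⋊[α.comp H.subtype] H) →* (N ⋊[α] G) :=
  SemidirectProduct.map (MonoidHom.id N) H.subtype (fun _ => rfl)

/-! Every element of `G ⋉ N` factors as `n g`, and every `F` in `Ind_{H ⋉ N}^{G ⋉ N} φ` satisfies
`F (n g) = φ(n) F(g)`. Hence restriction to `G` is a linear isomorphism onto `Ind_H^G (φ|_H)`,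
with inverse `f ↦ ((n, g) ↦ φ(n) f(g))`, and it commutes with right translation by `G`. -/

open SemidirectProduct

section SemidirectInduction

variable {G N V : Type*} [Group G] [Group N] (α : G →* MulAut N) (H : Subgroup G)
  [AddCommGroup V] [Module ℂ V] (φ : Representation ℂ (N ⋊[α.comp H.subtype] H) V)

@[simp]
lemma sdInclusion_inl (n : N) : sdInclusion α H (inl n) = inl n :=
  map_inl _ _ _ n

@[simp]
lemma sdInclusion_inr (h : H) : sdInclusion α H (inr h) = inr (h : G) :=
  map_inr _ _ _ h

lemma inl_left_sdInclusion_mul_mul_inr_right (h : N ⋊[α.comp H.subtype] H) (x : N ⋊[α] G) :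
    (inl (sdInclusion α H h * x).left * inr h.right : N ⋊[α.comp H.subtype] H) =
      h * inl x.left := by
  ext <;> simp [sdInclusion, mul_left]

lemma IndSpace.apply_eq_inl_left_apply_inr_right (F : IndSpace (sdInclusion α H) φ)
    (x : N ⋊[α] G) :
    (F : N ⋊[α] G → V) x = φ (inl x.left) ((F : N ⋊[α] G → V) (inr x.right)) := by
  simpa [inl_left_mul_inr_right] using F.2 (inl x.left) (inr x.right)

def indExtendInl : IndSpace H.subtype (φ.comp inr) →ₗ[ℂ] IndSpace (sdInclusion α H) φ where
  toFun f := ⟨fun x => φ (inl x.left) ((f : G → V) x.right), fun h x => by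
    have hf : (f : G → V) (h.right * x.right) =
        φ (inr h.right) ((f : G → V) x.right) := f.2 h.right x.right
    have hmul := congrArg (fun k => φ k ((f : G → V) x.right))
      (inl_left_sdInclusion_mul_mul_inr_right α H h x)
    simpa [hf, map_mul, mul_right, sdInclusion] using hmul⟩
  map_add' _ _ := by ext; simp
  map_smul' _ _ := by ext; simp

def indRestrictInr : IndSpace (sdInclusion α H) φ →ₗ[ℂ] IndSpace H.subtype (φ.comp inr) where
  toFun F := ⟨fun g => (F : N ⋊[α] G → V) (inr g), fun h g => by
    simpa using F.2 (inr h) (inr g)⟩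
  map_add' _ _ := rfl
  map_smul' _ _ := rfl

def indSemidirectEquiv : IndSpace H.subtype (φ.comp inr) ≃ₗ[ℂ] IndSpace (sdInclusion α H) φ :=
  { indExtendInl α H φ with
    invFun := indRestrictInr α H φ
    left_inv := fun f => by ext; simp [indExtendInl, indRestrictInr]
    right_inv := fun F => by
      ext x
      exact (IndSpace.apply_eq_inl_left_apply_inr_right α H φ F x).symm }

lemma indSemidirectEquiv_ind_apply (g : G) (f : IndSpace H.subtype (φ.comp inr)) :
    indSemidirectEquiv α H φ (Ind H.subtype (φ.comp inr) g f) =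
      Ind (sdInclusion α H) φ (inr g) (indSemidirectEquiv α H φ f) := by
  ext x
  simp [indSemidirectEquiv, indExtendInl, Ind, mul_left]

end SemidirectInduction

theorem ind_restrict_semidirect_general {G N V : Type*} [Group G] [Group N]
    (α : G →* MulAut N) (H : Subgroup G)
    [AddCommGroup V] [Module ℂ V]
    (φ : Representation ℂ (N ⋊[α.comp H.subtype] H) V) :
    RepEquiv (Ind H.subtype (φ.comp SemidirectProduct.inr))
      ((Ind (sdInclusion α H) φ).comp SemidirectProduct.inr) :=
  ⟨indSemidirectEquiv α H φ, indSemidirectEquiv_ind_apply α H φ⟩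

/-- Let `H` be a subgroup of a finite group `G`, let `G` act on a
finite group `N` by automorphisms, and let `φ` be a finite-dimensional complex
representation of `H ⋉ N`.  Then `Ind_H^G (φ|_H)` is isomorphic, as a representation
of `G`, to the restriction to `G` of `Ind_{H ⋉ N}^{G ⋉ N} φ`. -/
theorem ind_restrict_semidirect {G N V : Type*} [Group G] [Finite G] [Group N] [Finite N]
    (α : G →* MulAut N) (H : Subgroup G)
    [AddCommGroup V] [Module ℂ V] [FiniteDimensional ℂ V]
    (φ : Representation ℂ (N ⋊[α.comp H.subtype] H) V) :
    RepEquiv (Ind H.subtype (φ.comp SemidirectProduct.inr))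
      ((Ind (sdInclusion α H) φ).comp SemidirectProduct.inr) :=
  ind_restrict_semidirect_general α H φ
end

section
/- Let F be a finite field of odd characteristic and let ψ : (F, +) → ℂ^× be a group homomorphism. Let W_n = F^{2n} be the standard symplectic space with symplectic basis e₁, …, e_n, e′_n, …, e′_1 (so ⟨e_i, e′_j⟩ = δ_{ij} and ⟨e_i, e_j⟩ = ⟨e′_i, e′_j⟩ = 0), let 0 ≤ k ≤ n, let X_k be the span of e₁, …, e_k, let X̌_k be the span of e′_1, …, e′_k, and let W_{n−k} be the span of e_{k+1}, …, e_n, e′_n, …, e′_{k+1}, so that every w ∈ W_n is uniquely w = x + w₀ + x̌ with x ∈ X_k, w₀ ∈ W_{n−k}, x̌ ∈ X̌_k. Let (ρ₀, S) be a finite-dimensional complex representation of the Heisenberg group H(W_{n−k}) (for the restriction of the symplectic form) with ρ₀(0, t) = ψ(t)·id_S for all t ∈ F. Then the formula (ρ(w, t) f)(y̌) = ψ(⟨y̌, x⟩ + ⟨x̌, x⟩/2 + t) · ρ₀(w₀, 0)(f(x̌ + y̌)), for f in the space S(X̌_k, S) of S-valued functions on X̌_k and y̌ ∈ X̌_k,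 defines a representation ρ of the Heisenberg group H(W_n) on S(X̌_k, S) satisfying ρ(0, t) = ψ(t)·id for all t ∈ F; moreover, if ψ is nontrivial and ρ₀ is irreducible, then ρ is irreducible. -/
/-- The Heisenberg group of a bilinear form `β` on `V`: the set `V × F` with
multiplication `(v, t) (v', t') = (v + v', t + t' + β v v' / 2)`. -/
@[ext]
structure Heisenberg {F V : Type*} [Field F] [AddCommGroup V] [Module F V]
    (β : V →ₗ[F] V →ₗ[F] F) where
  v : V
  t : F

namespace Heisenberg

variable {F V : Type*} [Field F] [AddCommGroup V] [Module F V] {β : V →ₗ[F] V →ₗ[F] F}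

/-- Multiplication in the Heisenberg group. -/
def mul (a b : Heisenberg β) : Heisenberg β :=
  ⟨a.v + b.v, a.t + b.t + β a.v b.v / 2⟩

/-- Identity element of the Heisenberg group. -/
def one : Heisenberg β := ⟨0, 0⟩

/-- Inverse in the Heisenberg group (for an alternating form `β` this is
`(v, t)⁻¹ = (-v, -t)`). -/
def inv (a : Heisenberg β) : Heisenberg β := ⟨-a.v, -a.t + β a.v a.v / 2⟩

instance : Group (Heisenberg β) where
  mul := mul
  one := one
  inv := inv
  mul_assoc a b c := by
    show mul (mul a b) c = mul a (mul b c)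
    unfold mul
    ext
    · exact add_assoc _ _ _
    · simp only [map_add, LinearMap.add_apply]
      ring
  one_mul a := by
    show mul one a = a
    unfold mul one
    ext <;> simp
  mul_one a := by
    show mul a one = a
    unfold mul one
    ext <;> simp
  inv_mul_cancel a := by
    show mul (inv a) a = one
    unfold mul inv one
    ext
    · simp
    · simp only [map_neg, LinearMap.neg_apply]
      ring

end Heisenberg

/-- A representation is irreducible if the underlying space is nonzero and its
only invariant subspaces are `⊥` and `⊤`. -/
def IsIrreducibleRep {G V : Type*} [Group G] [AddCommGroup V] [Module ℂ V]
    (ρ : Representation ℂ G V) : Prop :=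
  Nontrivial V ∧ ∀ p : Submodule ℂ V, (∀ g : G, ∀ x ∈ p, ρ g x ∈ p) → p = ⊥ ∨ p = ⊤

/-- The dot-product pairing on `Fin m → F`. -/
noncomputable def dotForm (F : Type*) [Field F] (m : ℕ) :
    (Fin m → F) →ₗ[F] (Fin m → F) →ₗ[F] F :=
  LinearMap.mk₂ F (fun a b => ∑ i, a i * b i)
    (fun a a' b => by simp [add_mul, Finset.sum_add_distrib])
    (fun c a b => by simp [Finset.mul_sum, mul_assoc])
    (fun a b b' => by simp [mul_add, Finset.sum_add_distrib])
    (fun c a b => by simp [Finset.mul_sum]; ring_nf; simp [mul_comm, mul_left_comm])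

/-- The standard symplectic form on `F^{2m} = (Fin m → F) × (Fin m → F)`,
with `⟨e_i, e'_j⟩ = δ_{ij}` for the standard symplectic basis `e_i = (δ_i, 0)`,
`e'_j = (0, δ_j)`. -/
noncomputable def symplForm (F : Type*) [Field F] (m : ℕ) :
    ((Fin m → F) × (Fin m → F)) →ₗ[F] ((Fin m → F) × (Fin m → F)) →ₗ[F] F :=
  LinearMap.mk₂ F (fun w w' => dotForm F m w.1 w'.2 - dotForm F m w'.1 w.2)
    (fun a a' b => by simp [map_add, LinearMap.add_apply]; ring)
    (fun c a b => by simp; ring)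
    (fun a b b' => by simp [map_add, LinearMap.add_apply]; ring)
    (fun c a b => by simp; ring)

/-- The standard symplectic space `W_n = F^{2n}`, written in coordinates adapted to
the Witt decomposition `W_n = X_k ⊕ W_{n-k} ⊕ X̌_k`: an element is a triple
`(x, w₀, x̌)` with `x ∈ X_k = F^k` (coordinates in `e₁, …, e_k`),
`w₀ ∈ W_{n-k} = F^{2(n-k)}` (coordinates in `e_{k+1}, …, e_n, e′_n, …, e′_{k+1}`)
and `x̌ ∈ X̌_k = F^k` (coordinates in `e′_1, …, e′_k`). -/
abbrev WittSpace (F : Type*) [Field F] (n k : ℕ) : Type _ :=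
  (Fin k → F) × ((Fin (n - k) → F) × (Fin (n - k) → F)) × (Fin k → F)

/-- The standard symplectic form on `W_n` in the above coordinates; it satisfies
`⟨e_i, e′_j⟩ = δ_{ij}` and `⟨e_i, e_j⟩ = ⟨e′_i, e′_j⟩ = 0`. -/
noncomputable def wittForm (F : Type*) [Field F] (n k : ℕ) :
    WittSpace F n k →ₗ[F] WittSpace F n k →ₗ[F] F :=
  LinearMap.mk₂ F
    (fun w w' => dotForm F k w.1 w'.2.2 - dotForm F k w'.1 w.2.2 +
      symplForm F (n - k) w.2.1 w'.2.1)
    (fun a a' b => by simp [map_add, LinearMap.add_apply]; ring)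
    (fun c a b => by simp; ring)
    (fun a b b' => by simp [map_add, LinearMap.add_apply]; ring)
    (fun c a b => by simp; ring)

/-! The operators multiply correctly by a direct expansion of the Heisenberg cocycle; this is
where `2 ≠ 0` enters, as the two halves of `⟨x̌, x'⟩` have to add up to a whole.

For irreducibility, let `p` be a nonzero invariant subspace and `f ∈ p` with `f y₀ ≠ 0`. The
elements of `X_k` act by multiplication by the characters `y ↦ ψ ⟨y, x⟩`, so averaging them
against `ψ (-⟨y₀, x⟩)` and using orthogonality of characters puts the function supported at
`y₀` with value `f y₀` into `p`. The values `s` whose delta function at `y₀` lies in `p` form a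
`ρ₀`-invariant subspace, since `W_{n-k}` acts pointwise; it is therefore all of `S`, and the
translations by `X̌_k` move these delta functions to every point. -/

namespace Heisenberg

variable {F V : Type*} [Field F] [AddCommGroup V] [Module F V] {β : V →ₗ[F] V →ₗ[F] F}

@[simp]
lemma mk_mul_mk (v w : V) (s t : F) :
    (⟨v, s⟩ : Heisenberg β) * ⟨w, t⟩ = ⟨v + w, s + t + β v w / 2⟩ := rfl

lemma one_def : (1 : Heisenberg β) = ⟨0, 0⟩ := rfl

variable {S : Type*} [AddCommGroup S] [Module ℂ S] {ψ : AddChar F ℂ}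
  {ρ : Representation ℂ (Heisenberg β) S}

lemma rep_mk_eq_smul (hρ : ∀ t : F, ρ ⟨0, t⟩ = ψ t • 1) (v : V) (t : F) :
    ρ ⟨v, t⟩ = ψ t • ρ ⟨v, 0⟩ := by
  have : (⟨v, t⟩ : Heisenberg β) = ⟨0, t⟩ * ⟨v, 0⟩ := by ext <;> simp
  rw [this, map_mul, hρ, smul_mul_assoc, one_mul]

lemma rep_mk_zero_mul (hρ : ∀ t : F, ρ ⟨0, t⟩ = ψ t • 1) (u v : V) :
    ρ ⟨u, 0⟩ * ρ ⟨v, 0⟩ = ψ (β u v / 2) • ρ ⟨u + v, 0⟩ := by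
  rw [← map_mul, mk_mul_mk, zero_add, zero_add, rep_mk_eq_smul hρ]

end Heisenberg

lemma AddChar.sum_apply_dotProduct {F ι : Type*} [Field F] [Fintype F] [Fintype ι]
    [DecidableEq ι] {ψ : AddChar F ℂ} (hψ : ψ ≠ 1) (a : ι → F) [Decidable (a = 0)] :
    ∑ x : ι → F, ψ (x ⬝ᵥ a) = if a = 0 then (Fintype.card (ι → F) : ℂ) else 0 := by
  let φ : AddChar (ι → F) ℂ :=
    ψ.compAddMonoidHom (AddMonoidHom.mk' (· ⬝ᵥ a) fun x y => add_dotProduct x y a)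
  have hφ : φ = 0 ↔ a = 0 := by
    refine ⟨fun h => ?_, fun h => by ext x; simp [φ, h]⟩
    by_contra ha
    obtain ⟨j, hj⟩ := Function.ne_iff.mp ha
    obtain ⟨t, ht⟩ := AddChar.ne_one_iff.mp hψ
    apply ht
    have : (Pi.single j (t / a j) : ι → F) ⬝ᵥ a = t := by
      rw [single_dotProduct, div_mul_cancel₀ t hj]
    simpa [φ, this] using DFunLike.congr_fun h (Pi.single j (t / a j))
  classical
  simpa [φ, hφ] using AddChar.sum_eq_ite φ

lemma Submodule.single_mem_of_forall_charMul_mem {F ι S : Type*} [Field F] [Fintype F]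
    [DecidableEq F] [Fintype ι] [DecidableEq ι] [AddCommGroup S] [Module ℂ S]
    {ψ : AddChar F ℂ} (hψ : ψ ≠ 1)
    {p : Submodule ℂ ((ι → F) → S)}
    (hp : ∀ x : ι → F, ∀ f ∈ p, (fun y => ψ (x ⬝ᵥ y) • f y) ∈ p)
    {f : (ι → F) → S} (hf : f ∈ p) (y₀ : ι → F) : Pi.single y₀ (f y₀) ∈ p := by
  have hsum : ∑ x : ι → F, ψ (x ⬝ᵥ -y₀) • (fun y => ψ (x ⬝ᵥ y) • f y) =
      (Fintype.card (ι → F) : ℂ) • Pi.single y₀ (f y₀) := by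
    ext y
    simp only [Finset.sum_apply, Pi.smul_apply, smul_smul, ← AddChar.map_add_eq_mul,
      ← dotProduct_add, ← Finset.sum_smul, AddChar.sum_apply_dotProduct hψ, neg_add_eq_zero]
    by_cases hy : y₀ = y
    · subst hy
      simp
    · simp [hy]
  have := p.smul_mem (Fintype.card (ι → F) : ℂ)⁻¹
    (p.sum_mem (t := Finset.univ) fun x _ => p.smul_mem (ψ (x ⬝ᵥ -y₀)) (hp x f hf))
  rwa [hsum, smul_smul, inv_mul_cancel₀ (Nat.cast_ne_zero.mpr Fintype.card_ne_zero),
    one_smul] at this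

lemma Submodule.eq_top_of_forall_single_mem {R Y S : Type*} [Semiring R] [AddCommGroup Y]
    [Fintype Y] [DecidableEq Y] [AddCommMonoid S] [Module R S] {p : Submodule R (Y → S)}
    (hp : ∀ c : Y, ∀ f ∈ p, (fun y => f (c + y)) ∈ p) (y₀ : Y)
    (hsingle : ∀ s : S, Pi.single y₀ s ∈ p) : p = ⊤ := by
  have hshift (y : Y) (s : S) :
      Pi.single y s = fun y' => (Pi.single y₀ s : Y → S) (y₀ - y + y') := by
    ext y'
    simp only [Pi.single_apply, ← eq_sub_iff_add_eq', sub_sub_cancel]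
  refine eq_top_iff.mpr fun f _ => ?_
  rw [← Finset.univ_sum_single f]
  exact p.sum_mem fun y _ => hshift y (f y) ▸ hp _ _ (hsingle (f y))

lemma wittForm_apply {F : Type*} [Field F] {n k : ℕ} (w w' : WittSpace F n k) :
    wittForm F n k w w' = w.1 ⬝ᵥ w'.2.2 - w'.1 ⬝ᵥ w.2.2 + symplForm F (n - k) w.2.1 w'.2.1 :=
  rfl

section MixedSchrodinger

variable {F : Type*} [Field F] (n k : ℕ) {S : Type*} [AddCommGroup S] [Module ℂ S]
  (ψ : AddChar F ℂ) (ρ₀ : Representation ℂ (Heisenberg (symplForm F (n - k))) S)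

noncomputable def mixedSchrodingerOp (g : Heisenberg (wittForm F n k)) :
    ((Fin k → F) → S) →ₗ[ℂ] ((Fin k → F) → S) where
  toFun f y := ψ (wittForm F n k (0, 0, y) (g.v.1, 0, 0) +
      wittForm F n k (0, 0, g.v.2.2) (g.v.1, 0, 0) / 2 + g.t) • ρ₀ ⟨g.v.2.1, 0⟩ (f (g.v.2.2 + y))
  map_add' f f' := by ext y; simp only [Pi.add_apply, map_add, smul_add]
  map_smul' c f := by ext y; simp only [Pi.smul_apply, map_smul, RingHom.id_apply]; rw [smul_comm]

lemma mixedSchrodingerOp_apply (v : WittSpace F n k) (t : F) (f : (Fin k → F) → S) (y : Fin k → F) :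
    mixedSchrodingerOp n k ψ ρ₀ ⟨v, t⟩ f y =
      ψ (t - v.1 ⬝ᵥ y - v.1 ⬝ᵥ v.2.2 / 2) • ρ₀ ⟨v.2.1, 0⟩ (f (v.2.2 + y)) := by
  simp only [mixedSchrodingerOp, LinearMap.coe_mk, AddHom.coe_mk, wittForm_apply]
  congr 2
  simp only [dotProduct_zero, map_zero]
  ring

lemma mixedSchrodingerOp_neg_x (x : Fin k → F) (f : (Fin k → F) → S) :
    mixedSchrodingerOp n k ψ ρ₀ ⟨(-x, 0, 0), 0⟩ f = fun y => ψ (x ⬝ᵥ y) • f y := by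
  ext y
  simp [mixedSchrodingerOp_apply, ← Heisenberg.one_def]

lemma mixedSchrodingerOp_xcheck (c : Fin k → F) (f : (Fin k → F) → S) :
    mixedSchrodingerOp n k ψ ρ₀ ⟨(0, 0, c), 0⟩ f = fun y => f (c + y) := by
  ext y
  simp [mixedSchrodingerOp_apply, ← Heisenberg.one_def]

lemma mixedSchrodingerOp_middle (hρ₀ : ∀ t : F, ρ₀ ⟨0, t⟩ = ψ t • 1)
    (w₀ : (Fin (n - k) → F) × (Fin (n - k) → F)) (t : F) (f : (Fin k → F) → S) :
    mixedSchrodingerOp n k ψ ρ₀ ⟨(0, w₀, 0), t⟩ f = fun y => ρ₀ ⟨w₀, t⟩ (f y) := by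
  ext y
  simp [mixedSchrodingerOp_apply, Heisenberg.rep_mk_eq_smul hρ₀ w₀ t]

lemma mixedSchrodingerOp_center (t : F) : mixedSchrodingerOp n k ψ ρ₀ ⟨0, t⟩ = ψ t • 1 := by
  ext f y
  simp [mixedSchrodingerOp_apply, ← Heisenberg.one_def]

variable {ψ ρ₀}

noncomputable def mixedSchrodinger (h2 : (2 : F) ≠ 0) (hρ₀ : ∀ t : F, ρ₀ ⟨0, t⟩ = ψ t • 1) :
    Representation ℂ (Heisenberg (wittForm F n k)) ((Fin k → F) → S) where
  toFun := mixedSchrodingerOp n k ψ ρ₀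
  map_one' := by
    ext f y
    rw [Heisenberg.one_def, mixedSchrodingerOp_apply]
    simp [← Heisenberg.one_def]
  map_mul' := by
    rintro ⟨v, s⟩ ⟨w, t⟩
    ext f y
    rw [Heisenberg.mk_mul_mk, Module.End.mul_apply, mixedSchrodingerOp_apply,
      mixedSchrodingerOp_apply, mixedSchrodingerOp_apply, map_smul, ← Module.End.mul_apply,
      Heisenberg.rep_mk_zero_mul hρ₀, LinearMap.smul_apply, smul_smul, smul_smul,
      ← AddChar.map_add_eq_mul, ← AddChar.map_add_eq_mul]
    congr 2
    · simp only [wittForm_apply, Prod.fst_add, Prod.snd_add, add_dotProduct, dotProduct_add]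
      field_simp
      ring
    · rw [Prod.snd_add, Prod.snd_add, add_left_comm, add_assoc]

theorem mixedSchrodinger_isIrreducible [Fintype F] (h2 : (2 : F) ≠ 0)
    (hρ₀ : ∀ t : F, ρ₀ ⟨0, t⟩ = ψ t • 1) (hψ : ψ ≠ 1) (hirr : IsIrreducibleRep ρ₀) :
    IsIrreducibleRep (mixedSchrodinger n k h2 hρ₀) := by
  classical
  obtain ⟨_, hρ₀_irr⟩ := hirr
  refine ⟨Function.nontrivial, fun p hp => (eq_or_ne p ⊥).imp_right fun hne => ?_⟩
  replace hp : ∀ g, ∀ f ∈ p, mixedSchrodingerOp n k ψ ρ₀ g f ∈ p := hp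
  obtain ⟨f, hfp, hf0⟩ := (Submodule.ne_bot_iff p).mp hne
  obtain ⟨y₀, hy₀⟩ := Function.ne_iff.mp hf0
  have hdelta : Pi.single y₀ (f y₀) ∈ p :=
    Submodule.single_mem_of_forall_charMul_mem hψ
      (fun x f hf => mixedSchrodingerOp_neg_x n k ψ ρ₀ x f ▸ hp _ f hf) hfp y₀
  let M := p.comap (LinearMap.single ℂ (fun _ => S) y₀)
  have hM_inv : ∀ g, ∀ s ∈ M, ρ₀ g s ∈ M := by
    rintro ⟨w₀, t⟩ s hs
    have := hp ⟨(0, w₀, 0), t⟩ (Pi.single y₀ s) hs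
    rwa [mixedSchrodingerOp_middle n k ψ ρ₀ hρ₀,
      ← Pi.single_op (fun _ => ρ₀ ⟨w₀, t⟩) (fun _ => map_zero _)] at this
  have hM : M = ⊤ := (hρ₀_irr M hM_inv).resolve_left fun hM =>
    hy₀ ((Submodule.mem_bot ℂ).mp (hM ▸ hdelta : f y₀ ∈ (⊥ : Submodule ℂ S)))
  refine Submodule.eq_top_of_forall_single_mem
    (fun c f hf => mixedSchrodingerOp_xcheck n k ψ ρ₀ c f ▸ hp _ f hf) y₀ fun s => ?_
  exact (show s ∈ M from hM ▸ Submodule.mem_top)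

end MixedSchrodinger

theorem mixed_schrodinger_model_general {F : Type*} [Field F] [Fintype F]
    (h2 : (2 : F) ≠ 0) (ψ : AddChar F ℂ) (n k : ℕ)
    {S : Type*} [AddCommGroup S] [Module ℂ S]
    (ρ₀ : Representation ℂ (Heisenberg (symplForm F (n - k))) S)
    (hρ₀ : ∀ t : F, ρ₀ ⟨0, t⟩ = ψ t • (1 : S →ₗ[ℂ] S)) :
    ∃ ρ : Representation ℂ (Heisenberg (wittForm F n k)) ((Fin k → F) → S),
      (∀ (w : WittSpace F n k) (t : F) (f : (Fin k → F) → S) (yv : Fin k → F),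
        ρ ⟨w, t⟩ f yv =
          ψ (wittForm F n k (0, 0, yv) (w.1, 0, 0) +
              wittForm F n k (0, 0, w.2.2) (w.1, 0, 0) / 2 + t) •
            ρ₀ ⟨w.2.1, 0⟩ (f (w.2.2 + yv))) ∧
      (∀ t : F, ρ ⟨0, t⟩ = ψ t • (1 : ((Fin k → F) → S) →ₗ[ℂ] ((Fin k → F) → S))) ∧
      ((∃ t : F, ψ t ≠ 1) → IsIrreducibleRep ρ₀ → IsIrreducibleRep ρ) :=
  ⟨mixedSchrodinger n k h2 hρ₀, fun _ _ _ _ => rfl, mixedSchrodingerOp_center n k ψ ρ₀,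
    fun hψ => mixedSchrodinger_isIrreducible n k h2 hρ₀ (AddChar.ne_one_iff.mpr hψ)⟩

/-- (Mixed Schrödinger model for the Heisenberg representation.)
Let `F` be a finite field of odd characteristic, `ψ : (F, +) → ℂ×` a character, and
`W_n = X_k ⊕ W_{n-k} ⊕ X̌_k` the standard symplectic space as above.  Given a
representation `(ρ₀, S)` of `H(W_{n-k})` with `ρ₀(0, t) = ψ(t)·id`, the formula
`(ρ(w, t) f)(yv) = ψ(⟨yv, x⟩ + ⟨x̌, x⟩/2 + t) · ρ₀(w₀, 0)(f(x̌ + yv))`, for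
`w = x + w₀ + x̌`, defines a representation `ρ` of `H(W_n)` on `S(X̌_k, S)` with
`ρ(0, t) = ψ(t)·id`; moreover `ρ` is irreducible whenever `ψ` is nontrivial and
`ρ₀` is irreducible. -/
theorem mixed_schrodinger_model {F : Type*} [Field F] [Fintype F]
    (h2 : (2 : F) ≠ 0) (ψ : AddChar F ℂ) (n k : ℕ) (hk : k ≤ n)
    {S : Type*} [AddCommGroup S] [Module ℂ S] [FiniteDimensional ℂ S]
    (ρ₀ : Representation ℂ (Heisenberg (symplForm F (n - k))) S)
    (hρ₀ : ∀ t : F, ρ₀ ⟨0, t⟩ = ψ t • (1 : S →ₗ[ℂ] S)) :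
    ∃ ρ : Representation ℂ (Heisenberg (wittForm F n k)) ((Fin k → F) → S),
      (∀ (w : WittSpace F n k) (t : F) (f : (Fin k → F) → S) (yv : Fin k → F),
        ρ ⟨w, t⟩ f yv =
          ψ (wittForm F n k (0, 0, yv) (w.1, 0, 0) +
              wittForm F n k (0, 0, w.2.2) (w.1, 0, 0) / 2 + t) •
            ρ₀ ⟨w.2.1, 0⟩ (f (w.2.2 + yv))) ∧
      (∀ t : F, ρ ⟨0, t⟩ = ψ t • (1 : ((Fin k → F) → S) →ₗ[ℂ] ((Fin k → F) → S))) ∧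
      ((∃ t : F, ψ t ≠ 1) → IsIrreducibleRep ρ₀ → IsIrreducibleRep ρ) :=
  mixed_schrodinger_model_general h2 ψ n k ρ₀ hρ₀
end

section
/- Let F be a finite field of odd characteristic, let W = F^{2n} be equipped with a nondegenerate alternating F-bilinear form β, and let Sp(W) = { g ∈ GL(W) : β(g v, g w) = β(v, w) for all v, w ∈ W } be the symplectic group. Let Z be the set of F-linear maps x : F^k → W whose image is totally isotropic, i.e. β(x(u), x(v)) = 0 for all u, v ∈ F^k, and let GL_k(F) × Sp(W) act on Z by (a, g)·x = g ∘ x ∘ a⁻¹. Then two elements of Z lie in the same orbit if and only if they have the same rank, and the ranks attained on Z are exactly 0, 1, …, min(k, n). -/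
/-!
Every linearly independent, totally isotropic family `v₁, …, v_r` in a symplectic space of
dimension `2n` extends to a Darboux basis `e₁, …, e_n, f₁, …, f_n`: pick `q` with `β v₁ q = 1`
and `q ⟂ v₂, …, v_r`, and induct on the orthogonal complement of the hyperbolic pair `v₁, q`.
Hence `r ≤ n`, and any two such families of the same length are matched by a symplectic
automorphism (the one sending one Darboux basis to the other). After a change of basis of `F^k`
an isotropic map sends its first `rank` basis vectors to an isotropic independent family and the
others to `0`, so isotropic maps of equal rank lie in one orbit; and every rank up to `min k n`
is realised by composing a coordinate projection with such a family.
-/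

open Module LinearMap

section

variable {F W : Type*} [Field F] [AddCommGroup W] [Module F W] {β : W →ₗ[F] W →ₗ[F] F}

structure IsDarbouxFamily (β : W →ₗ[F] W →ₗ[F] F) {ι : Type*} [DecidableEq ι] (e f : ι → W) :
    Prop where
  isotropic_left : ∀ i j, β (e i) (e j) = 0
  isotropic_right : ∀ i j, β (f i) (f j) = 0
  pairing : ∀ i j, β (e i) (f j) = if i = j then 1 else 0

namespace IsDarbouxFamily

variable {ι : Type*} [DecidableEq ι] {e f e' f' : ι → W}

theorem linearIndependent [Fintype ι] (h : IsDarbouxFamily β e f) :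
    LinearIndependent F (Sum.elim e f) := by
  refine Fintype.linearIndependent_iff.2 fun c hc => ?_
  simp only [Fintype.sum_sum_type, Sum.elim_inl, Sum.elim_inr] at hc
  have hl : ∀ j, c (.inl j) = 0 := fun j => by
    simpa [map_sum, h.isotropic_right, h.pairing] using congr(β $hc (f j))
  have hr : ∀ j, c (.inr j) = 0 := fun j => by
    simpa [map_sum, h.isotropic_left, h.pairing, hl] using congr(β (e j) $hc)
  rintro (j | j)
  exacts [hl j, hr j]

theorem apply_sum_elim_eq (hβ : β.IsAlt) (h : IsDarbouxFamily β e f)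
    (h' : IsDarbouxFamily β e' f') (s t : ι ⊕ ι) :
    β (Sum.elim e f s) (Sum.elim e f t) = β (Sum.elim e' f' s) (Sum.elim e' f' t) := by
  rcases s with i | i <;> rcases t with j | j
  · simp [h.isotropic_left, h'.isotropic_left]
  · simp [h.pairing, h'.pairing]
  · simp [← hβ.neg (e j), ← hβ.neg (e' j), h.pairing, h'.pairing]
  · simp [h.isotropic_right, h'.isotropic_right]

theorem exists_isometry [Fintype ι] [FiniteDimensional F W] (hβ : β.IsAlt)
    (hdim : finrank F W = 2 * Fintype.card ι) (h : IsDarbouxFamily β e f)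
    (h' : IsDarbouxFamily β e' f') :
    ∃ g : W ≃ₗ[F] W, (∀ v w, β (g v) (g w) = β v w) ∧ ∀ i, g (e i) = e' i := by
  have hcard : Fintype.card (ι ⊕ ι) = finrank F W := by simp [hdim, two_mul]
  let b := basisOfLinearIndependentOfCardEqFinrank' _ h.linearIndependent hcard
  let b' := basisOfLinearIndependentOfCardEqFinrank' _ h'.linearIndependent hcard
  let g := b.equiv b' (Equiv.refl _)
  have hg : ∀ s, g (Sum.elim e f s) = Sum.elim e' f' s := fun s => by
    simpa [b, b'] using b.equiv_apply s b' (Equiv.refl _)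
  have hiso : β.compl₁₂ g.toLinearMap g.toLinearMap = β := b.ext fun s => b.ext fun t => by
    simpa [hg, b] using (h.apply_sum_elim_eq hβ h' s t).symm
  exact ⟨g, fun v w => congr($hiso v w), fun i => hg (.inl i)⟩

end IsDarbouxFamily

theorem exists_apply_eq_of_linearIndependent [FiniteDimensional F W] (hβ : β.SeparatingLeft)
    {ι : Type*} {v : ι → W} (hv : LinearIndependent F v) (c : ι → F) :
    ∃ q, ∀ i, β q (v i) = c i := by
  obtain ⟨φ, hφ⟩ := LinearMap.exists_extend ((Basis.span hv).constr F c)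
  have hsurj : Function.Surjective β :=
    (injective_iff_surjective_of_finrank_eq_finrank Subspace.dual_finrank_eq.symm).1
      (ker_eq_bot.1 (separatingLeft_iff_ker_eq_bot.1 hβ))
  obtain ⟨q, rfl⟩ := hsurj φ
  refine ⟨q, fun i => ?_⟩
  have hφi := congr($hφ (Basis.span hv i))
  rwa [Basis.constr_basis, comp_apply, Submodule.subtype_apply, Basis.span_apply] at hφi

section HyperbolicPair

variable {p q : W}

theorem apply_swap_eq_neg_one (hβ : β.IsAlt) (hpq : β p q = 1) : β q p = -1 := by
  rw [← hβ.neg, hpq]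

/-- `w` minus its component in the hyperbolic plane spanned by `p` and `q`. -/
theorem sub_add_mem_ker_inf_ker (hβ : β.IsAlt) (hpq : β p q = 1) (w : W) :
    w - β p w • q + β q w • p ∈ ker (β p) ⊓ ker (β q) := by
  simp [hpq, apply_swap_eq_neg_one hβ hpq, hβ p, hβ q]

theorem finrank_ker_inf_ker_add_two [FiniteDimensional F W] (hβ : β.IsAlt) (hpq : β p q = 1) :
    finrank F ↥(ker (β p) ⊓ ker (β q)) + 2 = finrank F W := by
  have hsurj : range ((β p).prod (β q)) = ⊤ := by
    refine range_eq_top.2 fun ⟨s, t⟩ => ⟨s • q - t • p, ?_⟩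
    simp [hpq, apply_swap_eq_neg_one hβ hpq, hβ p, hβ q]
  have := finrank_range_add_finrank_ker ((β p).prod (β q))
  rw [hsurj, ker_prod, finrank_top, finrank_prod, finrank_self] at this
  omega

theorem separatingLeft_domRestrict₁₂_ker_inf_ker (hβ : β.IsAlt) (hsep : β.SeparatingLeft)
    (hpq : β p q = 1) :
    (β.domRestrict₁₂ (ker (β p) ⊓ ker (β q)) (ker (β p) ⊓ ker (β q))).SeparatingLeft := by
  intro x hx
  refine Subtype.ext (hsep x fun w => ?_)
  have hw := hx ⟨_, sub_add_mem_ker_inf_ker hβ hpq w⟩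
  obtain ⟨hxp, hxq⟩ : β p x = 0 ∧ β q x = 0 := x.2
  simp only [domRestrict₁₂_apply, map_add, map_sub, map_smul, smul_eq_mul] at hw
  rwa [← hβ.neg q, ← hβ.neg p, hxp, hxq, neg_zero, mul_zero, mul_zero, add_zero, sub_zero] at hw

theorem IsDarbouxFamily.cons (hβ : β.IsAlt) {m : ℕ} {e f : Fin m → W}
    (h : IsDarbouxFamily β e f) (hpq : β p q = 1)
    (he : ∀ i, e i ∈ ker (β p) ⊓ ker (β q)) (hf : ∀ i, f i ∈ ker (β p) ⊓ ker (β q)) :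
    IsDarbouxFamily β (Fin.cons p e) (Fin.cons q f) := by
  simp only [Submodule.mem_inf, mem_ker] at he hf
  have he' : ∀ i, β (e i) p = 0 ∧ β (e i) q = 0 := fun i =>
    ⟨hβ.eq_iff.1 (he i).1, hβ.eq_iff.1 (he i).2⟩
  have hf' : ∀ i, β (f i) p = 0 ∧ β (f i) q = 0 := fun i =>
    ⟨hβ.eq_iff.1 (hf i).1, hβ.eq_iff.1 (hf i).2⟩
  constructor <;> intro i j <;> cases i using Fin.cases <;> cases j using Fin.cases <;>
    simp [hβ p, hβ q, hpq, he, hf, he', hf', h.isotropic_left, h.isotropic_right, h.pairing,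
      Fin.succ_ne_zero, eq_comm (a := (0 : Fin _))]

end HyperbolicPair

theorem exists_apply_eq_one_mem_ker_inf_ker [FiniteDimensional F W] (hβ : β.IsAlt)
    (hsep : β.SeparatingLeft) {r : ℕ} {v : Fin (r + 1) → W} (hv : LinearIndependent F v)
    (hiso : ∀ i j, β (v i) (v j) = 0) :
    ∃ q, β (v 0) q = 1 ∧ ∀ i : Fin r, v i.succ ∈ ker (β (v 0)) ⊓ ker (β q) := by
  obtain ⟨q, hq⟩ := exists_apply_eq_of_linearIndependent hsep hv fun i => if i = 0 then -1 else 0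
  refine ⟨q, by rw [← hβ.neg, hq, if_pos rfl, neg_neg], fun i => ⟨hiso 0 i.succ, ?_⟩⟩
  simpa [Fin.succ_ne_zero] using hq i.succ

theorem exists_isDarbouxFamily_extending [FiniteDimensional F W] (hβ : β.IsAlt)
    (hsep : β.SeparatingLeft) {n : ℕ} (hdim : finrank F W = 2 * n) {r : ℕ} (v : Fin r → W)
    (hv : LinearIndependent F v) (hiso : ∀ i j, β (v i) (v j) = 0) :
    ∃ (hr : r ≤ n) (e f : Fin n → W), IsDarbouxFamily β e f ∧ ∀ i, e (Fin.castLE hr i) = v i := by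
  induction n generalizing W r with
  | zero =>
    have : Subsingleton W := finrank_zero_iff.1 hdim
    obtain rfl : r = 0 := by
      by_contra hr
      exact hv.ne_zero ⟨0, Nat.pos_of_ne_zero hr⟩ (Subsingleton.elim _ _)
    exact ⟨le_rfl, Fin.elim0, Fin.elim0, ⟨fun i => i.elim0, fun i => i.elim0, fun i => i.elim0⟩,
      fun i => i.elim0⟩
  | succ m ih =>
    suffices key : ∀ (r : ℕ) (v : Fin (r + 1) → W), LinearIndependent F v →
        (∀ i j, β (v i) (v j) = 0) →
        ∃ (hr : r + 1 ≤ m + 1) (e f : Fin (m + 1) → W),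
          IsDarbouxFamily β e f ∧ ∀ i, e (Fin.castLE hr i) = v i by
      cases r with
      | zero =>
        have : Nontrivial W := finrank_pos_iff (R := F).1 (by omega)
        obtain ⟨p, hp⟩ := exists_ne (0 : W)
        have hp' : LinearIndependent F ![p] := .of_subsingleton 0 hp
        obtain ⟨-, e, f, h, -⟩ := key 0 ![p] hp' fun _ _ => by simpa using hβ p
        exact ⟨Nat.zero_le _, e, f, h, fun i => i.elim0⟩
      | succ r => exact key r v hv hiso
    intro r v hv hiso
    obtain ⟨q, hpq, hvW'⟩ := exists_apply_eq_one_mem_ker_inf_ker hβ hsep hv hiso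
    set W' := ker (β (v 0)) ⊓ ker (β q)
    have hW' : finrank F W' + 2 = finrank F W := finrank_ker_inf_ker_add_two hβ hpq
    obtain ⟨hr, e, f, h, hev⟩ := ih (W := W') (fun x => hβ x)
      (separatingLeft_domRestrict₁₂_ker_inf_ker hβ hsep hpq)
      (by omega) (fun i => ⟨v i.succ, hvW' i⟩)
      (LinearIndependent.of_comp W'.subtype (hv.comp _ (Fin.succ_injective r)))
      (fun i j => hiso i.succ j.succ)
    refine ⟨Nat.succ_le_succ hr, Fin.cons (v 0) (W'.subtype ∘ e), Fin.cons q (W'.subtype ∘ f),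
      IsDarbouxFamily.cons hβ ⟨h.1, h.2, h.3⟩ hpq (fun i => (e i).2) (fun i => (f i).2), ?_⟩
    intro i
    cases i using Fin.cases with
    | zero => rfl
    | succ i => exact congr(Subtype.val $(hev i))

theorem apply_eq_zero_of_mem_span {s : Set W} (hs : ∀ x ∈ s, ∀ y ∈ s, β x y = 0) {a b : W}
    (ha : a ∈ Submodule.span F s) (hb : b ∈ Submodule.span F s) : β a b = 0 := by
  have hker : ∀ x ∈ s, Submodule.span F s ≤ ker (β x) := fun x hx =>
    Submodule.span_le.2 fun y hy => hs x hx y hy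
  have hker_flip : Submodule.span F s ≤ ker (β.flip b) :=
    Submodule.span_le.2 fun x hx => hker x hx hb
  exact hker_flip ha

section Symplectic

variable [FiniteDimensional F W] {n : ℕ}

theorem finrank_le_of_isotropic 
    (hβ : β.IsAlt) (hsep : β.SeparatingLeft) (hdim : finrank F W = 2 * n)
    {U : Submodule F W} (hU : ∀ x ∈ U, ∀ y ∈ U, β x y = 0) :
    finrank F U ≤ n := by
  let b := finBasis F U
  obtain ⟨hr, -⟩ := exists_isDarbouxFamily_extending hβ hsep hdim (U.subtype ∘ b)
    (b.linearIndependent.map' _ U.ker_subtype) (fun i j => hU _ (b i).2 _ (b j).2)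
  exact hr

theorem exists_isometry_apply_eq 
    (hβ : β.IsAlt) (hsep : β.SeparatingLeft) (hdim : finrank F W = 2 * n)
    {r : ℕ} {v v' : Fin r → W} (hv : LinearIndependent F v) (hv' : LinearIndependent F v')
    (hiso : ∀ i j, β (v i) (v j) = 0)
    (hiso' : ∀ i j, β (v' i) (v' j) = 0) :
    ∃ g : W ≃ₗ[F] W, (∀ x y, β (g x) (g y) = β x y) ∧ ∀ i, g (v i) = v' i := by
  obtain ⟨hr, e, f, h, hev⟩ := exists_isDarbouxFamily_extending hβ hsep hdim v hv hiso
  obtain ⟨hr', e', f', h', hev'⟩ := exists_isDarbouxFamily_extending hβ hsep hdim v' hv' hiso'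
  obtain ⟨g, hg, hge⟩ := h.exists_isometry hβ (by simpa using hdim) h'
  exact ⟨g, hg, fun i => by rw [← hev, hge, ← hev']⟩

theorem exists_isotropic_linearIndependent 
    (hβ : β.IsAlt) (hsep : β.SeparatingLeft) (hdim : finrank F W = 2 * n)
    {r : ℕ} (hr : r ≤ n) :
    ∃ v : Fin r → W, LinearIndependent F v ∧ ∀ i j, β (v i) (v j) = 0 := by
  obtain ⟨-, e, f, h, -⟩ := exists_isDarbouxFamily_extending hβ hsep hdim Fin.elim0
    linearIndependent_empty_type (fun i => i.elim0)
  exact ⟨e ∘ Fin.castLE hr,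
    h.linearIndependent.comp _ (Sum.inl_injective.comp (Fin.castLE_injective hr)),
    fun i j => h.isotropic_left _ _⟩

end Symplectic

theorem LinearMap.exists_basis_linearIndependent_inl_inr_mem_ker {V : Type*} [AddCommGroup V]
    [Module F V] [FiniteDimensional F V] (x : V →ₗ[F] W) {r s : ℕ}
    (hr : finrank F (range x) = r) (hs : finrank F (ker x) = s) :
    ∃ u : Basis (Fin r ⊕ Fin s) F V,
      LinearIndependent F (fun i => x (u (.inl i))) ∧ ∀ j, u (.inr j) ∈ ker x := by
  obtain ⟨C, hC⟩ := (ker x).exists_isCompl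
  have hCr : finrank F C = r := by
    have := Submodule.finrank_add_eq_of_isCompl hC
    have := finrank_range_add_finrank_ker x
    omega
  let bC := finBasisOfFinrankEq F C hCr
  let u := (bC.prod (finBasisOfFinrankEq F (ker x) hs)).map
    (Submodule.prodEquivOfIsCompl C (ker x) hC.symm)
  refine ⟨u, ?_, fun j => by simp [u]⟩
  have hinj : ker (x ∘ₗ C.subtype) = ⊥ := by
    rw [ker_comp, ← Submodule.disjoint_iff_comap_eq_bot]
    exact hC.symm.disjoint
  have hxu : (fun i => x (u (.inl i))) = (x ∘ₗ C.subtype) ∘ bC := by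
    ext i
    simp [u]
  rw [hxu]
  exact bC.linearIndependent.map' _ hinj

theorem LinearMap.finrank_range_equiv_comp_comp_equiv {V V' W' : Type*} [AddCommGroup V]
    [Module F V] [AddCommGroup V'] [Module F V'] [AddCommGroup W'] [Module F W']
    (g : W ≃ₗ[F] W') (x : V →ₗ[F] W) (a : V' ≃ₗ[F] V) :
    finrank F (range (g.toLinearMap ∘ₗ x ∘ₗ a.toLinearMap)) = finrank F (range x) := by
  rw [range_comp, range_comp_of_range_eq_top _ a.range, LinearEquiv.finrank_map_eq]

section IsotropicMaps

variable {V : Type*} [AddCommGroup V] [Module F V] [FiniteDimensional F V] [FiniteDimensional F W]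
  {n : ℕ}

theorem exists_equiv_isometry_eq_comp_of_finrank_range_eq 
    (hβ : β.IsAlt) (hsep : β.SeparatingLeft) (hdim : finrank F W = 2 * n)
    {x y : V →ₗ[F] W} (hx : ∀ u v, β (x u) (x v) = 0) (hy : ∀ u v, β (y u) (y v) = 0)
    (hxy : finrank F (range x) = finrank F (range y)) :
    ∃ (a : V ≃ₗ[F] V) (g : W ≃ₗ[F] W), (∀ v w, β (g v) (g w) = β v w) ∧
      y = g.toLinearMap ∘ₗ x ∘ₗ a.symm.toLinearMap := by
  have hker : finrank F (ker x) = finrank F (ker y) := by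
    have := finrank_range_add_finrank_ker x
    have := finrank_range_add_finrank_ker y
    omega
  obtain ⟨u, hu, hu0⟩ := x.exists_basis_linearIndependent_inl_inr_mem_ker rfl rfl
  obtain ⟨u', hu', hu0'⟩ := y.exists_basis_linearIndependent_inl_inr_mem_ker hxy.symm hker.symm
  obtain ⟨g, hg, hgu⟩ := exists_isometry_apply_eq hβ hsep hdim hu hu' (fun _ _ => hx _ _)
    (fun _ _ => hy _ _)
  refine ⟨u.equiv u' (Equiv.refl _), g, hg, u'.ext fun t => ?_⟩
  rcases t with i | j
  · simp [hgu]
  · simp [mem_ker.1 (hu0 j), mem_ker.1 (hu0' j)]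

theorem exists_isotropic_finrank_range_eq 
    (hβ : β.IsAlt) (hsep : β.SeparatingLeft) (hdim : finrank F W = 2 * n)
    {r : ℕ} (hrV : r ≤ finrank F V) (hrn : r ≤ n) :
    ∃ x : V →ₗ[F] W, (∀ u v, β (x u) (x v) = 0) ∧ finrank F (range x) = r := by
  obtain ⟨v, hv, hiso⟩ := exists_isotropic_linearIndependent hβ hsep hdim hrn
  let P := funLeft F F (Fin.castLE hrV) ∘ₗ (finBasis F V).equivFun.toLinearMap
  have hP : range P = ⊤ := range_eq_top.2 <|
    (funLeft_surjective_of_injective F F _ (Fin.castLE_injective hrV)).comp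
      (finBasis F V).equivFun.surjective
  have hrange : range (Fintype.linearCombination F v ∘ₗ P) = Submodule.span F (Set.range v) := by
    rw [range_comp_of_range_eq_top _ hP, Fintype.range_linearCombination]
  refine ⟨Fintype.linearCombination F v ∘ₗ P, fun a b => ?_, ?_⟩
  · refine apply_eq_zero_of_mem_span ?_ (hrange ▸ mem_range_self _ a)
      (hrange ▸ mem_range_self _ b)
    rintro _ ⟨i, rfl⟩ _ ⟨j, rfl⟩
    exact hiso i j
  · rw [hrange, finrank_span_eq_card hv, Fintype.card_fin]

end IsotropicMaps

end

theorem isotropic_maps_orbits_general {F W : Type*} [Field F]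
    [AddCommGroup W] [Module F W] [FiniteDimensional F W] (n k : ℕ)
    (hdim : Module.finrank F W = 2 * n)
    (β : W →ₗ[F] W →ₗ[F] F)
    (halt : ∀ w : W, β w w = 0)
    (hnd : ∀ v : W, (∀ w : W, β v w = 0) → v = 0) :
    (∀ x y : (Fin k → F) →ₗ[F] W,
      (∀ u v, β (x u) (x v) = 0) → (∀ u v, β (y u) (y v) = 0) →
      ((∃ (a : (Fin k → F) ≃ₗ[F] (Fin k → F)) (g : W ≃ₗ[F] W),
          (∀ v w : W, β (g v) (g w) = β v w) ∧
          y = g.toLinearMap ∘ₗ x ∘ₗ a.symm.toLinearMap) ↔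
        Module.finrank F (LinearMap.range x) = Module.finrank F (LinearMap.range y))) ∧
    {r : ℕ | ∃ x : (Fin k → F) →ₗ[F] W,
        (∀ u v, β (x u) (x v) = 0) ∧ Module.finrank F (LinearMap.range x) = r} =
      {r : ℕ | r ≤ min k n} := by
  refine ⟨fun x y hx hy =>
    ⟨?_, exists_equiv_isometry_eq_comp_of_finrank_range_eq halt hnd hdim hx hy⟩, ?_⟩
  · rintro ⟨a, g, -, rfl⟩
    exact (x.finrank_range_equiv_comp_comp_equiv g a.symm).symm
  · ext r
    simp only [Set.mem_ofPred_eq, le_min_iff]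
    refine ⟨?_, fun ⟨hrk, hrn⟩ =>
      exists_isotropic_finrank_range_eq halt hnd hdim (by simpa using hrk) hrn⟩
    rintro ⟨x, hx, rfl⟩
    refine ⟨(finrank_range_le x).trans (by simp), finrank_le_of_isotropic halt hnd hdim ?_⟩
    rintro _ ⟨u, rfl⟩ _ ⟨v, rfl⟩
    exact hx u v

/-- Let `F` be a finite field of odd characteristic, `W = F^{2n}`
a symplectic space with nondegenerate alternating form `β`, and let `Z` be the set
of linear maps `x : F^k → W` with totally isotropic image, on which
`GL_k(F) × Sp(W)` acts by `(a, g) · x = g ∘ x ∘ a⁻¹`.  Then two elements of `Z` lie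
in the same orbit if and only if they have the same rank, and the ranks attained on
`Z` are exactly `0, 1, …, min(k, n)`. -/
theorem isotropic_maps_orbits {F W : Type*} [Field F] [Fintype F]
    (h2 : (2 : F) ≠ 0)
    [AddCommGroup W] [Module F W] [FiniteDimensional F W] (n k : ℕ)
    (hdim : Module.finrank F W = 2 * n)
    (β : W →ₗ[F] W →ₗ[F] F)
    (halt : ∀ w : W, β w w = 0)
    (hnd : ∀ v : W, (∀ w : W, β v w = 0) → v = 0) :
    (∀ x y : (Fin k → F) →ₗ[F] W,
      (∀ u v, β (x u) (x v) = 0) → (∀ u v, β (y u) (y v) = 0) →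
      ((∃ (a : (Fin k → F) ≃ₗ[F] (Fin k → F)) (g : W ≃ₗ[F] W),
          (∀ v w : W, β (g v) (g w) = β v w) ∧
          y = g.toLinearMap ∘ₗ x ∘ₗ a.symm.toLinearMap) ↔
        Module.finrank F (LinearMap.range x) = Module.finrank F (LinearMap.range y))) ∧
    {r : ℕ | ∃ x : (Fin k → F) →ₗ[F] W,
        (∀ u v, β (x u) (x v) = 0) ∧ Module.finrank F (LinearMap.range x) = r} =
      {r : ℕ | r ≤ min k n} :=
  isotropic_maps_orbits_general n k hdim β halt hnd
end
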